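/- Let h₂, h₃ be real numbers with h₂² ≥ h₃² and h₂ ≠ 0. Then limsup as P → ∞ of [ 2·C((h₂² + h₃²)·P) − 2·C(h₂²·P − 1/2) ] is at most 1. -/

import Mathlib

/-!
For `P ≥ 0` and `h₃² ≤ h₂²` the SNRs satisfy `1 + (h₂² + h₃²) P ≤ 2 (1 + (h₂² P - 1/2))`, so the
gap, a difference of binary logarithms, is at most `log₂ 2 = 1`; it is nonnegative there by
monotonicity of `C`, which keeps the limsup from being a junk value.
-/

noncomputable def Cap (x : ℝ) : ℝ := (1/2) * Real.logb 2 (1 + x)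

open Filter Real

theorem two_mul_Cap (x : ℝ) : 2 * Cap x = logb 2 (1 + x) := by
  unfold Cap; ring

theorem Cap_le_Cap {x y : ℝ} (hx : -1 < x) (hxy : x ≤ y) : Cap x ≤ Cap y := by
  unfold Cap
  gcongr <;> linarith

theorem two_mul_Cap_sub_two_mul_Cap_le_one {x y : ℝ} (hx : -1 < x) (hy : -1 < y)
    (h : 1 + x ≤ 2 * (1 + y)) : 2 * Cap x - 2 * Cap y ≤ 1 := by
  have hx' : 0 < 1 + x := by linarith
  have hy' : 0 < 1 + y := by linarith
  calc 2 * Cap x - 2 * Cap y = logb 2 ((1 + x) / (1 + y)) := by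
        rw [two_mul_Cap, two_mul_Cap, logb_div hx'.ne' hy'.ne']
    _ ≤ logb 2 2 :=
        logb_le_logb_of_le one_lt_two (div_pos hx' hy') ((div_le_iff₀ hy').mpr h)
    _ = 1 := logb_self_eq_one one_lt_two

theorem two_mul_Cap_gap_mem_Icc {a b P : ℝ} (hb : 0 ≤ b) (hba : b ≤ a) (hP : 0 ≤ P) :
    2 * Cap ((a + b) * P) - 2 * Cap (a * P - 1/2) ∈ Set.Icc 0 1 := by
  have haP : 0 ≤ a * P := mul_nonneg (hb.trans hba) hP
  have hbP : b * P ≤ a * P := mul_le_mul_of_nonneg_right hba hP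
  have hlow : a * P - 1/2 ≤ (a + b) * P := by nlinarith [mul_nonneg hb hP]
  constructor
  · linarith [Cap_le_Cap (by linarith) hlow]
  · exact two_mul_Cap_sub_two_mul_Cap_le_one (by linarith) (by linarith) (by linarith)

open Filter in
theorem gap_limsup_restricted_general (h₂ h₃ : ℝ)
    (h23 : h₂^2 ≥ h₃^2) :
    limsup (fun P : ℝ =>
        2 * Cap ((h₂^2 + h₃^2) * P) - 2 * Cap (h₂^2 * P - 1/2)) atTop ≤ 1 := by
  have hgap : ∀ᶠ P in atTop,
      2 * Cap ((h₂^2 + h₃^2) * P) - 2 * Cap (h₂^2 * P - 1/2) ∈ Set.Icc (0 : ℝ) 1 := by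
    filter_upwards [eventually_ge_atTop 0] with P hP
    exact two_mul_Cap_gap_mem_Icc (sq_nonneg h₃) h23 hP
  exact limsup_le_of_le (isCoboundedUnder_le_of_eventually_le atTop (hgap.mono fun _ h => h.1))
    (hgap.mono fun _ h => h.2)

open Filter in
/-- The restricted Y-channel gap approaches at most 1 bit as P → ∞. -/
theorem gap_limsup_restricted (h₂ h₃ : ℝ)
    (h23 : h₂^2 ≥ h₃^2) (h₂ne : h₂ ≠ 0) :
    limsup (fun P : ℝ =>
        2 * Cap ((h₂^2 + h₃^2) * P) - 2 * Cap (h₂^2 * P - 1/2)) atTop ≤ 1 :=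
  gap_limsup_restricted_general h₂ h₃ h23
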